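/- arXiv:2301.05956 — 2 statements merged into one kernel-verified Lean document; each statement's English description precedes it below -/
import Mathlib

section
/- Let 𝒪 := ω + ζ·η + ω*. The set 𝒢(𝒪) of gaps of 𝒪, equipped with the order induced from the completion 𝒞(𝒪), is order-isomorphic to 𝟏 + (Σ_{r∈ℝ} S_r) + 𝟏, where S_r := 𝟐 if r ∈ ℚ and S_r := 𝟏 if r is irrational. -/
/-- A linear order is (Dedekind) complete if every nonempty subset bounded above has a
least upper bound. -/
def IsCompleteLO (α : Type*) [LinearOrder α] : Prop :=
  ∀ s : Set α, s.Nonempty → BddAbove s → ∃ a, IsLUB s a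

/-- `e : α ↪o β` exhibits `β` as a completion of `α`: `β` is complete and no proper
suborder of `β` containing (the image of) `α` is complete. -/
def IsCompletion {α β : Type*} [LinearOrder α] [LinearOrder β] (e : α ↪o β) : Prop :=
  IsCompleteLO β ∧ ∀ S : Set β, Set.range e ⊆ S → IsCompleteLO S → S = Set.univ

/-!
A gap `c` of `𝒪 = ω + ζ·η + ω*` is determined by the set `Q` of those `p ∈ ℚ` whose copy of `ζ`
lies below `c`. Indeed no point of the completion lies strictly between two neighbours in `𝒪`, so
`ω` lies below `c`, `ω*` above it, and each copy of `ζ` entirely on one side; and `c` is the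
supremum of the points of `𝒪` below it. Conversely, for every lower set `Q` the supremum of `ω`
and the copies of `ζ` indexed by `Q` is a gap, since that part of `𝒪` has no largest element and
its complement no smallest one. Hence `𝒢(𝒪)` is isomorphic to the lower sets of `ℚ`, which are
`∅`, `ℚ`, and the Dedekind cuts `{p | p < r}` (`r ∈ ℝ`) and `{p | p ≤ q}` (`q ∈ ℚ`): this is
`𝟏 + Σ_{r ∈ ℝ} S_r + 𝟏`.
-/

open Set Sum

namespace IsCompletion

variable {α C : Type*} [LinearOrder α] [LinearOrder C] {e : α ↪o C}

@[elab_as_elim]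
theorem induction (hC : IsCompletion e) {P : C → Prop} (hrange : ∀ a, P (e a))
    (hsup : ∀ t : Set C, (∀ x ∈ t, P x) → t.Nonempty → (∃ b ∈ upperBounds t, P b) →
      ∀ s, IsLUB t s → P s) (c : C) : P c := by
  refine eq_univ_iff_forall.1 (hC.2 {x | P x} (range_subset_iff.2 hrange)
    fun t ht ⟨⟨b, hb⟩, hbt⟩ => ?_) c
  have hbdd : b ∈ upperBounds (Subtype.val '' t) := forall_mem_image.2 fun x hx => hbt hx
  obtain ⟨s, hs⟩ := hC.1 _ (ht.image _) ⟨b, hbdd⟩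
  refine ⟨⟨s, hsup _ (forall_mem_image.2 fun x _ => x.2) (ht.image _) ⟨b, hbdd, hb⟩ s hs⟩,
    fun x hx => hs.1 (mem_image_of_mem _ hx), fun x hx => hs.2 ?_⟩
  exact forall_mem_image.2 fun y hy => hx hy

theorem exists_apply_le (hC : IsCompletion e) (c : C) : ∃ a, e a ≤ c :=
  hC.induction (fun a => ⟨a, le_rfl⟩)
    (fun _ ht ⟨x, hx⟩ _ _ hs => (ht x hx).imp fun _ ha => ha.trans (hs.1 hx)) c

theorem exists_le_apply (hC : IsCompletion e) (c : C) : ∃ a, c ≤ e a :=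
  hC.induction (fun a => ⟨a, le_rfl⟩)
    (fun _ _ _ ⟨_, hb, a, hba⟩ _ hs => ⟨a, (hs.2 hb).trans hba⟩) c

theorem isLUB_range_inter_Iic (hC : IsCompletion e) (c : C) : IsLUB (range e ∩ Iic c) c := by
  refine hC.induction (fun a => ?_) (fun t ht _ _ s hs => ⟨fun _ hx => hx.2, fun u hu => ?_⟩) c
  · exact (show IsGreatest (range e ∩ Iic (e a)) (e a) from
      ⟨⟨mem_range_self a, le_rfl⟩, fun _ hx => hx.2⟩).isLUB
  · exact hs.2 fun x hx => (ht x hx).2 fun y hy => hu ⟨hy.1, hy.2.trans (hs.1 hx)⟩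

theorem exists_lt_apply_le (hC : IsCompletion e) {c₁ c₂ : C} (h : c₁ < c₂) :
    ∃ a, c₁ < e a ∧ e a ≤ c₂ := by
  obtain ⟨_, ⟨⟨a, rfl⟩, -⟩, h₁, h₂⟩ := (hC.isLUB_range_inter_Iic c₂).exists_between h
  exact ⟨a, h₁, h₂⟩

theorem apply_lt_iff_of_covBy (hC : IsCompletion e) {c : C} (hc : c ∉ range e) {x y : α}
    (hxy : x ⋖ y) : e x < c ↔ e y < c := by
  refine ⟨fun hx => ?_, fun hy => (e.lt_iff_lt.2 hxy.lt).trans hy⟩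
  obtain ⟨a, hxa, hac⟩ := hC.exists_lt_apply_le hx
  have hac : e a < c := hac.lt_of_ne fun h => hc ⟨a, h⟩
  exact (e.le_iff_le.2 (hxy.ge_of_gt (e.lt_iff_lt.1 hxa))).trans_lt hac

end IsCompletion

theorem OrderEmbedding.notMem_range_of_isLUB_image {α C : Type*} [LinearOrder α]
    [LinearOrder C] (e : α ↪o C) {A : Set α} {c : C} (hA : IsLowerSet A)
    (hmax : ∀ a ∈ A, ∃ b ∈ A, a < b) (hmin : ∀ a ∉ A, ∃ b ∉ A, b < a)
    (hc : IsLUB (e '' A) c) : c ∉ range e := by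
  rintro ⟨a, rfl⟩
  by_cases ha : a ∈ A
  · obtain ⟨b, hb, hab⟩ := hmax a ha
    exact (hc.1 (mem_image_of_mem e hb)).not_gt (e.lt_iff_lt.2 hab)
  · obtain ⟨b, hb, hba⟩ := hmin a ha
    refine (hc.2 (forall_mem_image.2 fun x hx => e.le_iff_le.2 ?_)).not_gt (e.lt_iff_lt.2 hba)
    exact le_of_not_ge fun hbx => hb (hA hbx hx)

theorem LowerSet.lt_iff_exists_mem_notMem {α : Type*} [LinearOrder α] {s t : LowerSet α} :
    s < t ↔ ∃ a ∈ t, a ∉ s := by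
  rw [lt_iff_not_ge, ← LowerSet.coe_subset_coe, not_subset]
  rfl

theorem Sum.Lex.strictMono_elim {α β γ : Type*} [Preorder α] [Preorder β] [Preorder γ]
    {f : α → γ} {g : β → γ} (hf : StrictMono f) (hg : StrictMono g) (hfg : ∀ a b, f a < g b) :
    StrictMono fun x : α ⊕ₗ β => Sum.elim f g (ofLex x) := by
  rintro (a | b) (a' | b') h
  · exact hf (Sum.Lex.inl_lt_inl_iff.1 h)
  · exact hfg a b'
  · exact absurd h Sum.Lex.not_inr_lt_inl
  · exact hg (Sum.Lex.inr_lt_inr_iff.1 h)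

theorem Sigma.Lex.strictMono_uncurry {ι γ : Type*} [Preorder ι] [Preorder γ] {β : ι → Type*}
    [∀ i, Preorder (β i)] {f : ∀ i, β i → γ} (hf : ∀ i, StrictMono (f i))
    (hlt : ∀ i j, i < j → ∀ a b, f i a < f j b) :
    StrictMono fun x : Σₗ i, β i => f (ofLex x).1 (ofLex x).2 := by
  rintro ⟨i, a⟩ ⟨j, b⟩ h
  rcases Sigma.Lex.lt_def.1 h with h | ⟨hij, h⟩
  · exact hlt i j h a b
  · obtain rfl : i = j := hij
    exact hf i h

abbrev 𝒪 : Type := ℕ ⊕ₗ (ℚ ×ₗ ℤ) ⊕ₗ ℕᵒᵈ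

namespace 𝒪

def left (n : ℕ) : 𝒪 := toLex (inl n)
def mid (p : ℚ) (z : ℤ) : 𝒪 := toLex (inr (toLex (inl (toLex (p, z)))))
def right (n : ℕ) : 𝒪 := toLex (inr (toLex (inr (OrderDual.toDual n))))

@[elab_as_elim]
theorem induction {P : 𝒪 → Prop} (left : ∀ n, P (left n)) (mid : ∀ p z, P (mid p z))
    (right : ∀ n, P (right n)) (x : 𝒪) : P x := by
  rcases x with n | (⟨p, z⟩ | n)
  exacts [left n, mid p z, right n]

theorem left_lt_left {m n : ℕ} : left m < left n ↔ m < n := Sum.Lex.inl_lt_inl_iff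
theorem left_lt_mid (n : ℕ) (p : ℚ) (z : ℤ) : left n < mid p z := Sum.Lex.inl_lt_inr _ _
theorem left_lt_right (m n : ℕ) : left m < right n := Sum.Lex.inl_lt_inr _ _
theorem mid_lt_mid {p p' : ℚ} {z z' : ℤ} : mid p z < mid p' z' ↔ p < p' ∨ p = p' ∧ z < z' := by
  simp [mid, Prod.Lex.toLex_lt_toLex]
theorem mid_lt_right (p : ℚ) (z : ℤ) (n : ℕ) : mid p z < right n := by simp [mid, right]
theorem right_lt_right {m n : ℕ} : right m < right n ↔ n < m := by simp [right]

theorem left_zero : left 0 = ⊥ := rfl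
theorem right_zero : right 0 = ⊤ := rfl

theorem monotone_mid (z : ℤ) : Monotone (mid · z) := fun _ _ h =>
  h.lt_or_eq.elim (fun h => (mid_lt_mid.2 (Or.inl h)).le) (fun h => h ▸ le_rfl)

theorem left_covBy (n : ℕ) : left n ⋖ left (n + 1) := by
  refine ⟨left_lt_left.2 n.lt_succ_self, fun x hx hx' => ?_⟩
  induction x using 𝒪.induction with
  | left m => have := left_lt_left.1 hx; have := left_lt_left.1 hx'; omega
  | mid p z => exact (left_lt_mid _ _ _).not_gt hx'
  | right m => exact (left_lt_right _ _).not_gt hx'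

theorem mid_covBy (p : ℚ) (z : ℤ) : mid p z ⋖ mid p (z + 1) := by
  refine ⟨mid_lt_mid.2 (Or.inr ⟨rfl, lt_add_one z⟩), fun x hx hx' => ?_⟩
  induction x using 𝒪.induction with
  | left m => exact (left_lt_mid _ _ _).not_gt hx
  | mid q w =>
    rcases mid_lt_mid.1 hx with h | ⟨rfl, h⟩ <;> rcases mid_lt_mid.1 hx' with h' | ⟨h', h''⟩
    · exact h.not_gt h'
    · exact h.ne' h'
    · exact lt_irrefl _ h'
    · omega
  | right m => exact (mid_lt_right _ _ _).not_gt hx'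

theorem right_covBy (n : ℕ) : right (n + 1) ⋖ right n := by
  refine ⟨right_lt_right.2 n.lt_succ_self, fun x hx hx' => ?_⟩
  induction x using 𝒪.induction with
  | left m => exact (left_lt_right _ _).not_gt hx
  | mid p z => exact (mid_lt_right _ _ _).not_gt hx
  | right m => have := right_lt_right.1 hx; have := right_lt_right.1 hx'; omega

/-- `ω` followed by the copies of `ζ` indexed by `Q`. -/
def lowerPart (Q : Set ℚ) : Set 𝒪 := fun x =>
  match ofLex x with
  | inl _ => True
  | inr y =>
    match ofLex y with
    | inl pz => (ofLex pz).1 ∈ Q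
    | inr _ => False

theorem left_mem_lowerPart (Q : Set ℚ) (n : ℕ) : left n ∈ lowerPart Q := trivial
theorem mid_mem_lowerPart {Q : Set ℚ} {p : ℚ} (z : ℤ) : mid p z ∈ lowerPart Q ↔ p ∈ Q := Iff.rfl
theorem right_notMem_lowerPart (Q : Set ℚ) (n : ℕ) : right n ∉ lowerPart Q := id

theorem isLowerSet_lowerPart {Q : Set ℚ} (hQ : IsLowerSet Q) : IsLowerSet (lowerPart Q) := by
  intro y x hxy hy
  induction x using 𝒪.induction with
  | left n => exact left_mem_lowerPart Q n
  | mid p z =>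
    induction y using 𝒪.induction with
    | left n => exact absurd hxy (left_lt_mid _ _ _).not_ge
    | mid p' z' => exact hQ (le_of_not_gt fun h => hxy.not_gt (mid_lt_mid.2 (Or.inl h))) hy
    | right n => exact absurd hy (right_notMem_lowerPart Q n)
  | right n =>
    induction y using 𝒪.induction with
    | left m => exact absurd hxy (left_lt_right _ _).not_ge
    | mid p z => exact absurd hxy (mid_lt_right _ _ _).not_ge
    | right m => exact absurd hy (right_notMem_lowerPart Q m)

theorem exists_gt_mem_lowerPart {Q : Set ℚ} {x : 𝒪} (hx : x ∈ lowerPart Q) :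
    ∃ y ∈ lowerPart Q, x < y := by
  induction x using 𝒪.induction with
  | left n => exact ⟨_, left_mem_lowerPart Q (n + 1), (left_covBy n).lt⟩
  | mid p z => exact ⟨_, (mid_mem_lowerPart (z + 1)).2 hx, (mid_covBy p z).lt⟩
  | right n => exact absurd hx (right_notMem_lowerPart Q n)

theorem exists_lt_notMem_lowerPart {Q : Set ℚ} {x : 𝒪} (hx : x ∉ lowerPart Q) :
    ∃ y ∉ lowerPart Q, y < x := by
  induction x using 𝒪.induction with
  | left n => exact absurd (left_mem_lowerPart Q n) hx
  | mid p z => exact ⟨mid p (z - 1), hx, by simpa using (mid_covBy p (z - 1)).lt⟩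
  | right n => exact ⟨_, right_notMem_lowerPart Q (n + 1), (right_covBy n).lt⟩

variable {C : Type*} [LinearOrder C] {e : 𝒪 ↪o C}

theorem isLowerSet_setOf_apply_mid_lt (c : C) : IsLowerSet {p | e (mid p 0) < c} :=
  fun _ _ hp h => (e.monotone (monotone_mid 0 hp)).trans_lt h

variable (hC : IsCompletion e)
include hC

theorem exists_isLUB_lowerPart (Q : Set ℚ) : ∃ c, IsLUB (e '' lowerPart Q) c :=
  hC.1 _ ⟨_, mem_image_of_mem e (left_mem_lowerPart Q 0)⟩
    ⟨e (right 0), forall_mem_image.2 fun _ _ => e.monotone (right_zero ▸ le_top)⟩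

noncomputable def gapOf (Q : Set ℚ) : C := (exists_isLUB_lowerPart hC Q).choose

theorem isLUB_gapOf (Q : Set ℚ) : IsLUB (e '' lowerPart Q) (gapOf hC Q) :=
  (exists_isLUB_lowerPart hC Q).choose_spec

theorem gapOf_notMem_range {Q : Set ℚ} (hQ : IsLowerSet Q) : gapOf hC Q ∉ range e :=
  e.notMem_range_of_isLUB_image (isLowerSet_lowerPart hQ) (fun _ => exists_gt_mem_lowerPart)
    (fun _ => exists_lt_notMem_lowerPart) (isLUB_gapOf hC Q)

theorem gapOf_lt_gapOf {Q Q' : Set ℚ} (hQ : IsLowerSet Q) {p : ℚ} (hp : p ∉ Q) (hp' : p ∈ Q') :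
    gapOf hC Q < gapOf hC Q' :=
  calc gapOf hC Q ≤ e (mid p 0) := (isLUB_gapOf hC Q).2 <| forall_mem_image.2 fun _ hx =>
        e.le_iff_le.2 <| le_of_not_gt fun h => hp (isLowerSet_lowerPart hQ h.le hx)
    _ < e (mid p 1) := e.lt_iff_lt.2 (mid_covBy p 0).lt
    _ ≤ gapOf hC Q' := (isLUB_gapOf hC Q').1 (mem_image_of_mem e hp')

section Gap

variable {c : C} (hc : c ∉ range e)
include hc

theorem apply_left_lt (n : ℕ) : e (left n) < c := by
  induction n with
  | zero =>
    obtain ⟨a, ha⟩ := hC.exists_apply_le c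
    exact (e.monotone (left_zero ▸ bot_le) |>.trans ha).lt_of_ne fun h => hc ⟨_, h⟩
  | succ n ih => exact (hC.apply_lt_iff_of_covBy hc (left_covBy n)).1 ih

theorem lt_apply_right (n : ℕ) : c < e (right n) := by
  induction n with
  | zero =>
    obtain ⟨a, ha⟩ := hC.exists_le_apply c
    exact (ha.trans (e.monotone (right_zero ▸ le_top))).lt_of_ne fun h => hc ⟨_, h.symm⟩
  | succ n ih =>
    refine lt_of_not_ge fun h => ?_
    have := (hC.apply_lt_iff_of_covBy hc (right_covBy n)).1 (h.lt_of_ne fun h' => hc ⟨_, h'⟩)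
    exact this.not_gt ih

theorem apply_mid_lt_iff (p : ℚ) (z : ℤ) : e (mid p z) < c ↔ e (mid p 0) < c := by
  induction z using Int.induction_on with
  | zero => rfl
  | succ z ih => rw [← ih, hC.apply_lt_iff_of_covBy hc (mid_covBy p z)]
  | pred z ih => rw [← ih, hC.apply_lt_iff_of_covBy hc (by simpa using mid_covBy p (-z - 1))]

theorem mem_lowerPart_setOf_iff (x : 𝒪) : x ∈ lowerPart {p | e (mid p 0) < c} ↔ e x < c := by
  induction x using 𝒪.induction with
  | left n => exact iff_of_true (left_mem_lowerPart _ n) (apply_left_lt hC hc n)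
  | mid p z => exact (apply_mid_lt_iff hC hc p z).symm
  | right n => exact iff_of_false (right_notMem_lowerPart _ n) (lt_apply_right hC hc n).not_gt

theorem gapOf_setOf_apply_mid_lt : gapOf hC {p | e (mid p 0) < c} = c := by
  refine (isLUB_gapOf hC _).unique ?_
  convert hC.isLUB_range_inter_Iic c using 1
  ext y
  constructor
  · rintro ⟨x, hx, rfl⟩
    exact ⟨mem_range_self x, ((mem_lowerPart_setOf_iff hC hc x).1 hx).le⟩
  · rintro ⟨⟨x, rfl⟩, hx⟩
    exact ⟨x, (mem_lowerPart_setOf_iff hC hc x).2 (hx.lt_of_ne fun h => hc ⟨x, h⟩), rfl⟩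

end Gap

noncomputable def lowerSetOrderIsoGaps : LowerSet ℚ ≃o {c : C // c ∉ range e} :=
  StrictMono.orderIsoOfSurjective (fun Q => ⟨gapOf hC Q, gapOf_notMem_range hC Q.lower⟩)
    (fun Q Q' h => by
      obtain ⟨p, hp', hp⟩ := LowerSet.lt_iff_exists_mem_notMem.1 h
      exact gapOf_lt_gapOf hC Q.lower hp hp')
    (fun ⟨_, hc⟩ =>
      ⟨⟨_, isLowerSet_setOf_apply_mid_lt _⟩, Subtype.ext (gapOf_setOf_apply_mid_lt hC hc)⟩)

end 𝒪

theorem LowerSet.exists_real_of_ne_bot_of_ne_top {Q : LowerSet ℚ} (hbot : Q ≠ ⊥) (htop : Q ≠ ⊤) :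
    ∃ r : ℝ, (∀ p : ℚ, (p : ℝ) < r → p ∈ Q) ∧ ∀ p ∈ Q, (p : ℝ) ≤ r := by
  obtain ⟨p₀, hp₀⟩ : ∃ p, p ∈ Q := by
    by_contra! h
    exact hbot (LowerSet.ext (eq_empty_of_forall_notMem h))
  obtain ⟨p₁, hp₁⟩ : ∃ p, p ∉ Q := by
    by_contra! h
    exact htop (LowerSet.ext (eq_univ_of_forall h))
  have hbdd : BddAbove (((↑) : ℚ → ℝ) '' Q) :=
    ⟨p₁, forall_mem_image.2 fun p hp => Rat.cast_le.2 (le_of_not_ge fun h => hp₁ (Q.lower h hp))⟩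
  refine ⟨sSup (((↑) : ℚ → ℝ) '' Q), fun p hp => ?_, fun p hp => le_csSup hbdd ⟨p, hp, rfl⟩⟩
  by_contra hpQ
  refine hp.not_ge (csSup_le ⟨_, mem_image_of_mem _ hp₀⟩ (forall_mem_image.2 fun p' hp' => ?_))
  exact Rat.cast_le.2 (le_of_not_ge fun h => hpQ (Q.lower h hp'))

section RatCut

variable {S : ℝ → Type*} [∀ r, LinearOrder (S r)]

/-- The rational `r` itself belongs to the cut exactly when `s` is the upper point of `S r ≅ 𝟐`. -/
def ratCut (r : ℝ) (s : S r) : LowerSet ℚ where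
  carrier := {p | (p : ℝ) < r ∨ (p : ℝ) = r ∧ ¬IsMin s}
  lower' p' p hp := by
    have hp : (p : ℝ) ≤ p' := Rat.cast_le.2 hp
    rintro (h | ⟨h, hs⟩)
    · exact Or.inl (hp.trans_lt h)
    · exact hp.lt_or_eq.imp (·.trans_eq h) fun h' => ⟨h'.trans h, hs⟩

theorem ratCut_lt_ratCut {r r' : ℝ} (h : r < r') (s : S r) (s' : S r') :
    ratCut r s < ratCut r' s' := by
  obtain ⟨p, hrp, hpr'⟩ := exists_rat_btwn h
  refine LowerSet.lt_iff_exists_mem_notMem.2 ⟨p, Or.inl hpr', ?_⟩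
  rintro (hp | ⟨hp, -⟩)
  exacts [hp.not_gt hrp, hp.not_gt hrp]

theorem bot_lt_ratCut (r : ℝ) (s : S r) : ⊥ < ratCut r s := by
  obtain ⟨p, hp⟩ := exists_rat_lt r
  exact LowerSet.lt_iff_exists_mem_notMem.2 ⟨p, Or.inl hp, id⟩

theorem ratCut_lt_top (r : ℝ) (s : S r) : ratCut r s < ⊤ := by
  obtain ⟨p, hp⟩ := exists_rat_gt r
  refine LowerSet.lt_iff_exists_mem_notMem.2 ⟨p, trivial, ?_⟩
  rintro (h | ⟨h, -⟩)
  exacts [h.not_gt hp, hp.ne' h]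

theorem eq_ratCut {Q : LowerSet ℚ} {r : ℝ} (hlt : ∀ p : ℚ, (p : ℝ) < r → p ∈ Q)
    (hle : ∀ p ∈ Q, (p : ℝ) ≤ r) {s : S r} (hs : ¬IsMin s ↔ ∃ q ∈ Q, (q : ℝ) = r) :
    Q = ratCut r s := by
  ext p
  refine ⟨fun hp => (hle p hp).lt_or_eq.imp_right fun h => ⟨h, hs.2 ⟨p, hp, h⟩⟩, ?_⟩
  rintro (h | ⟨h, hs'⟩)
  · exact hlt p h
  · obtain ⟨q, hq, hqr⟩ := hs.1 hs'
    exact Rat.cast_injective (h.trans hqr.symm) ▸ hq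

def sumCut (x : PUnit ⊕ₗ (Σₗ r, S r) ⊕ₗ PUnit) : LowerSet ℚ :=
  Sum.elim (fun _ => ⊥)
    (fun y => Sum.elim (fun rs => ratCut (ofLex rs).1 (ofLex rs).2) (fun _ => ⊤) (ofLex y))
    (ofLex x)

variable (hSq : ∀ q : ℚ, Nonempty (S q ≃o Fin 2))
include hSq

theorem exists_not_isMin (q : ℚ) : ∃ s : S q, ¬IsMin s := by
  obtain ⟨f⟩ := hSq q
  exact ⟨f.symm 1, not_isMin_iff.2 ⟨f.symm 0, f.symm.lt_iff_lt.2 Fin.zero_lt_one⟩⟩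

variable (hSirr : ∀ r : ℝ, Irrational r → Nonempty (S r ≃o PUnit))
include hSirr

theorem exists_isMin (r : ℝ) : ∃ s : S r, IsMin s := by
  by_cases hr : Irrational r
  · obtain ⟨f⟩ := hSirr r hr
    exact ⟨f.symm PUnit.unit, fun s _ => (f.injective (Subsingleton.elim _ _)).ge⟩
  · obtain ⟨q, rfl⟩ := not_not.1 hr
    obtain ⟨f⟩ := hSq q
    exact ⟨f.symm 0, fun s _ => f.symm_apply_le.2 (Fin.zero_le _)⟩

theorem exists_rat_eq_and_isMin_of_lt {r : ℝ} {s s' : S r} (h : s < s') :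
    ∃ q : ℚ, (q : ℝ) = r ∧ IsMin s := by
  by_cases hr : Irrational r
  · obtain ⟨f⟩ := hSirr r hr
    exact absurd (f.injective (Subsingleton.elim _ _)) h.ne
  · obtain ⟨q, rfl⟩ := not_not.1 hr
    obtain ⟨f⟩ := hSq q
    have hs : f s = 0 := by have := f.lt_iff_lt.2 h; omega
    exact ⟨q, rfl, fun b _ => f.le_iff_le.1 (hs ▸ Fin.zero_le _)⟩

theorem strictMono_ratCut (r : ℝ) : StrictMono (ratCut (S := S) r) := by
  intro s s' h
  obtain ⟨q, rfl, hs⟩ := exists_rat_eq_and_isMin_of_lt hSq hSirr h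
  refine LowerSet.lt_iff_exists_mem_notMem.2 ⟨q, Or.inr ⟨rfl, h.not_isMin⟩, ?_⟩
  rintro (hq | ⟨-, hs'⟩)
  exacts [hq.ne rfl, hs' hs]

theorem strictMono_sumCut : StrictMono (sumCut (S := S)) := by
  refine Sum.Lex.strictMono_elim (fun _ _ h => absurd h (lt_irrefl _))
    (Sum.Lex.strictMono_elim (Sigma.Lex.strictMono_uncurry (strictMono_ratCut hSq hSirr)
      fun _ _ h _ _ => ratCut_lt_ratCut h _ _) (fun _ _ h => absurd h (lt_irrefl _))
      fun _ _ => ratCut_lt_top _ _) ?_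
  rintro _ (rs | _)
  exacts [bot_lt_ratCut _ _, LowerSet.lt_iff_exists_mem_notMem.2 ⟨0, trivial, id⟩]

theorem surjective_sumCut : Function.Surjective (sumCut (S := S)) := by
  intro Q
  by_cases hbot : Q = ⊥
  · exact ⟨toLex (inl PUnit.unit), hbot.symm⟩
  by_cases htop : Q = ⊤
  · exact ⟨toLex (inr (toLex (inr PUnit.unit))), htop.symm⟩
  obtain ⟨r, hlt, hle⟩ := Q.exists_real_of_ne_bot_of_ne_top hbot htop
  obtain ⟨s, hs⟩ : ∃ s : S r, ¬IsMin s ↔ ∃ q ∈ Q, (q : ℝ) = r := by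
    by_cases h : ∃ q ∈ Q, (q : ℝ) = r
    · obtain ⟨q, hq, rfl⟩ := h
      exact (exists_not_isMin hSq q).imp fun s hs => iff_of_true hs ⟨q, hq, rfl⟩
    · exact (exists_isMin hSq hSirr r).imp fun s hs => iff_of_false (not_not.2 hs) h
  exact ⟨toLex (inr (toLex (inl (toLex ⟨r, s⟩)))), (eq_ratCut hlt hle hs).symm⟩

noncomputable def orderIsoLowerSetRat : (PUnit ⊕ₗ (Σₗ r, S r) ⊕ₗ PUnit) ≃o LowerSet ℚ :=
  StrictMono.orderIsoOfSurjective sumCut (strictMono_sumCut hSq hSirr)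
    (surjective_sumCut hSq hSirr)

end RatCut

/-- the set of gaps of `𝒪 := ω + ζ·η + ω*`, i.e. the complement of `𝒪` in
its completion with the induced order, is isomorphic to `𝟏 + (Σ_{r ∈ ℝ} S_r) + 𝟏`, where
`S_r = 𝟐` for rational `r` and `S_r = 𝟏` for irrational `r`. -/
theorem gaps_of_omega_zeta_eta_omegaStar (C : Type) [LinearOrder C]
    (e : (ℕ ⊕ₗ (ℚ ×ₗ ℤ) ⊕ₗ ℕᵒᵈ) ↪o C) (hC : IsCompletion e)
    (S : ℝ → Type) [∀ r, LinearOrder (S r)]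
    (hSq : ∀ q : ℚ, Nonempty (S q ≃o Fin 2))
    (hSirr : ∀ r : ℝ, Irrational r → Nonempty (S r ≃o PUnit)) :
    Nonempty ({c : C // c ∉ Set.range e} ≃o (PUnit ⊕ₗ (Σₗ r : ℝ, S r) ⊕ₗ PUnit)) :=
  ⟨(𝒪.lowerSetOrderIsoGaps hC).symm.trans (orderIsoLowerSetRat hSq hSirr).symm⟩
end

section
/- If L is a nonempty linear order in dLO_fp⁰¹ (discrete, finitely presented, with no minimum element and with a maximum element), then there exist L₁ ∈ dLO_fp¹¹ and L₂ ∈ dLO_fp¹¹ ∪ {𝟎} such that L ≅ L₁·ω* + L₂. -/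
/-- Bundled linear orders (in `Type 0`). -/
structure BLinOrd : Type 1 where
  carrier : Type
  [str : LinearOrder carrier]

attribute [instance] BLinOrd.str

/-- The bundled linear order on a given type. -/
def BLinOrd.of (α : Type) [LinearOrder α] : BLinOrd := ⟨α⟩

/-- The class of finitely presented linear orders: the smallest class of linear orders
containing `𝟎` and `𝟏` that is closed under order isomorphism, binary order sums,
and the anti-lexicographic products `L·ω` and `L·ω*`. -/
inductive LOfp : BLinOrd → Prop
  | empty : LOfp (BLinOrd.of (Fin 0))
  | one : LOfp (BLinOrd.of (Fin 1))
  | iso {X Y : BLinOrd} : LOfp X → Nonempty (X.carrier ≃o Y.carrier) → LOfp Y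
  | add {X Y : BLinOrd} : LOfp X → LOfp Y → LOfp (BLinOrd.of (X.carrier ⊕ₗ Y.carrier))
  | mulOmega {X : BLinOrd} : LOfp X → LOfp (BLinOrd.of (ℕ ×ₗ X.carrier))
  | mulOmegaStar {X : BLinOrd} : LOfp X → LOfp (BLinOrd.of (ℕᵒᵈ ×ₗ X.carrier))

/-- A linear order is discrete if every non-maximal element has an immediate successor
and every non-minimal element has an immediate predecessor. -/
def IsDiscreteLO (α : Type*) [LinearOrder α] : Prop :=
  (∀ a : α, (∃ b, a < b) → ∃ b, a ⋖ b) ∧ (∀ a : α, (∃ b, b < a) → ∃ b, b ⋖ a)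

/-- Bounded discrete finitely presented linear orders: discrete members of `LOfp` with a
minimum element and a maximum element. -/
def dLOfp11 (X : BLinOrd) : Prop :=
  LOfp X ∧ IsDiscreteLO X.carrier ∧
    (∃ a : X.carrier, ∀ x, a ≤ x) ∧ (∃ a : X.carrier, ∀ x, x ≤ a)

/-!
Every discrete finitely presented order is isomorphic to `P + A + Q`, where `P` is `𝟎` or `B·ω*`,
`Q` is `𝟎` or `C·ω` (with `B, C ∈ dLO_fp¹¹`) and `A ∈ dLO_fp¹¹ ∪ {𝟎}`; this is proved by induction
on the presentation. In a discrete sum `L₁ + L₂` of nonempty orders, `L₁` has a maximum iff `L₂`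
has a minimum, so either the inner ends `Q₁`, `P₂` both vanish or they merge with the middles into
the bounded order `A₁ + C₁·ω + B₂·ω* + A₂`. In a discrete product `L·ω`, `L` has a minimum iff it
has a maximum: either `L` is bounded and `L·ω` is itself a right end, or `L = B·ω* + A + C·ω` and
regrouping gives `L·ω ≅ B·ω* + (A + C·ω + B·ω*)·ω`; `L·ω*` is symmetric. A normal form with a
maximum and no minimum has `Q = 𝟎` and `P = B·ω*`.
-/

open Sum OrderDual

namespace Sum.Lex
variable {α β : Type*} [LinearOrder α] [LinearOrder β] {a a' : α} {b b' : β}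

theorem inl_covBy_inl_iff : (toLex (inl a) : α ⊕ₗ β) ⋖ toLex (inl a') ↔ a ⋖ a' := by
  simp only [CovBy, Lex.forall, Sum.forall, inl_lt_inl_iff, not_inr_lt_inl, inl_lt_inr,
    not_false_eq_true, implies_true, and_true]

theorem inr_covBy_inr_iff : (toLex (inr b) : α ⊕ₗ β) ⋖ toLex (inr b') ↔ b ⋖ b' := by
  simp only [CovBy, Lex.forall, Sum.forall, inr_lt_inr_iff, not_inr_lt_inl, inl_lt_inr,
    not_false_eq_true, implies_true, true_and, not_true_eq_false, imp_false]

theorem inl_covBy_inr_iff : (toLex (inl a) : α ⊕ₗ β) ⋖ toLex (inr b) ↔ IsMax a ∧ IsMin b := by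
  simp [CovBy, isMax_iff_forall_not_lt, isMin_iff_forall_not_lt]

theorem not_inr_covBy_inl : ¬ (toLex (inr b) : α ⊕ₗ β) ⋖ toLex (inl a) :=
  fun h => not_inr_lt_inl h.lt

theorem isBot_inl (ha : IsBot a) : IsBot (toLex (inl a) : α ⊕ₗ β) := by
  rintro (a' | b)
  exacts [inl_le_inl_iff.2 (ha a'), inl_le_inr a b]

theorem isBot_inr [IsEmpty α] (hb : IsBot b) : IsBot (toLex (inr b) : α ⊕ₗ β) := by
  rintro (a | b')
  exacts [isEmptyElim a, inr_le_inr_iff.2 (hb b')]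

theorem isTop_inr (hb : IsTop b) : IsTop (toLex (inr b) : α ⊕ₗ β) := by
  rintro (a | b')
  exacts [inl_le_inr a b, inr_le_inr_iff.2 (hb b')]

theorem isTop_inl [IsEmpty β] (ha : IsTop a) : IsTop (toLex (inl a) : α ⊕ₗ β) := by
  rintro (a' | b)
  exacts [inl_le_inl_iff.2 (ha a'), isEmptyElim b]

theorem isEmpty_or_exists_isBot (hα : IsEmpty α ∨ ∃ a : α, IsBot a)
    (hβ : IsEmpty β ∨ ∃ b : β, IsBot b) : IsEmpty (α ⊕ₗ β) ∨ ∃ x : α ⊕ₗ β, IsBot x := by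
  rcases hα with hα | ⟨a, ha⟩
  · rcases hβ with hβ | ⟨b, hb⟩
    exacts [.inl (inferInstanceAs (IsEmpty (α ⊕ β))), .inr ⟨_, isBot_inr hb⟩]
  · exact .inr ⟨_, isBot_inl ha⟩

theorem isEmpty_or_exists_isTop (hα : IsEmpty α ∨ ∃ a : α, IsTop a)
    (hβ : IsEmpty β ∨ ∃ b : β, IsTop b) : IsEmpty (α ⊕ₗ β) ∨ ∃ x : α ⊕ₗ β, IsTop x := by
  rcases hβ with hβ | ⟨b, hb⟩
  · rcases hα with hα | ⟨a, ha⟩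
    exacts [.inl (inferInstanceAs (IsEmpty (α ⊕ β))), .inr ⟨_, isTop_inl ha⟩]
  · exact .inr ⟨_, isTop_inr hb⟩

end Sum.Lex

def OrderIso.prodLexDualDistrib (α β : Type*) [LinearOrder α] [LinearOrder β] :
    (α ×ₗ β)ᵒᵈ ≃o αᵒᵈ ×ₗ βᵒᵈ where
  toEquiv := OrderDual.ofDual.trans <| ofLex.trans <|
    (Equiv.prodCongr OrderDual.toDual OrderDual.toDual).trans toLex
  map_rel_iff' {x y} := by
    obtain ⟨a, b⟩ := x
    obtain ⟨c, d⟩ := y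
    change toLex (toDual a, toDual b) ≤ toLex (toDual c, toDual d) ↔ toLex (c, d) ≤ toLex (a, b)
    simp [Prod.Lex.toLex_le_toLex, eq_comm]

namespace IsDiscreteLO
variable {α β : Type*} [LinearOrder α] [LinearOrder β]

theorem of_orderIso (e : α ≃o β) (h : IsDiscreteLO α) : IsDiscreteLO β := by
  refine ⟨fun b ⟨c, hc⟩ => ?_, fun b ⟨c, hc⟩ => ?_⟩
  · obtain ⟨a, ha⟩ := h.1 (e.symm b) ⟨e.symm c, e.symm.strictMono hc⟩
    exact ⟨e a, by simpa using (apply_covBy_apply_iff e).2 ha⟩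
  · obtain ⟨a, ha⟩ := h.2 (e.symm b) ⟨e.symm c, e.symm.strictMono hc⟩
    exact ⟨e a, by simpa using (apply_covBy_apply_iff e).2 ha⟩

theorem congr (e : α ≃o β) : IsDiscreteLO α ↔ IsDiscreteLO β :=
  ⟨of_orderIso e, of_orderIso e.symm⟩

theorem of_isEmpty [IsEmpty α] : IsDiscreteLO α :=
  ⟨isEmptyElim, isEmptyElim⟩

theorem of_subsingleton [Subsingleton α] : IsDiscreteLO α :=
  ⟨fun a ⟨b, h⟩ => absurd h (Subsingleton.elim a b).not_lt,
    fun a ⟨b, h⟩ => absurd h (Subsingleton.elim b a).not_lt⟩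

end IsDiscreteLO

section DiscreteConstructions
variable {α β : Type*} [LinearOrder α] [LinearOrder β]

theorem isDiscreteLO_orderDual_iff : IsDiscreteLO αᵒᵈ ↔ IsDiscreteLO α := by
  simp only [IsDiscreteLO, OrderDual.forall, OrderDual.exists, toDual_lt_toDual,
    toDual_covBy_toDual_iff]
  exact and_comm

open Sum.Lex in
theorem IsDiscreteLO.of_sumLex (h : IsDiscreteLO (α ⊕ₗ β)) :
    IsDiscreteLO α ∧ IsDiscreteLO β ∧
      (Nonempty α → Nonempty β → ((∃ a : α, IsTop a) ↔ ∃ b : β, IsBot b)) := by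
  refine ⟨⟨fun a ⟨c, hc⟩ => ?_, fun a ⟨c, hc⟩ => ?_⟩, ⟨fun b ⟨c, hc⟩ => ?_, fun b ⟨c, hc⟩ => ?_⟩,
    fun ⟨a₀⟩ ⟨b₀⟩ => ⟨fun ⟨a, ha⟩ => ?_, fun ⟨b, hb⟩ => ?_⟩⟩
  · obtain ⟨a' | b, hcov⟩ := h.1 (toLex (inl a)) ⟨toLex (inl c), inl_lt_inl_iff.2 hc⟩
    · exact ⟨a', inl_covBy_inl_iff.1 hcov⟩
    · exact absurd hc ((inl_covBy_inr_iff.1 hcov).1.not_lt)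
  · obtain ⟨a' | b, hcov⟩ := h.2 (toLex (inl a)) ⟨toLex (inl c), inl_lt_inl_iff.2 hc⟩
    · exact ⟨a', inl_covBy_inl_iff.1 hcov⟩
    · exact absurd hcov not_inr_covBy_inl
  · obtain ⟨a | b', hcov⟩ := h.1 (toLex (inr b)) ⟨toLex (inr c), inr_lt_inr_iff.2 hc⟩
    · exact absurd hcov not_inr_covBy_inl
    · exact ⟨b', inr_covBy_inr_iff.1 hcov⟩
  · obtain ⟨a | b', hcov⟩ := h.2 (toLex (inr b)) ⟨toLex (inr c), inr_lt_inr_iff.2 hc⟩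
    · exact absurd hc ((inl_covBy_inr_iff.1 hcov).2.not_lt)
    · exact ⟨b', inr_covBy_inr_iff.1 hcov⟩
  · obtain ⟨a' | b, hcov⟩ := h.1 (toLex (inl a)) ⟨toLex (inr b₀), inl_lt_inr _ _⟩
    · exact absurd (inl_covBy_inl_iff.1 hcov).lt ha.isMax.not_lt
    · exact ⟨b, (inl_covBy_inr_iff.1 hcov).2.isBot⟩
  · obtain ⟨a | b', hcov⟩ := h.2 (toLex (inr b)) ⟨toLex (inl a₀), inl_lt_inr _ _⟩
    · exact ⟨a, (inl_covBy_inr_iff.1 hcov).1.isTop⟩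
    · exact absurd (inr_covBy_inr_iff.1 hcov).lt hb.isMin.not_lt

open Sum.Lex in
theorem IsDiscreteLO.sumLex (hα : IsDiscreteLO α) (hβ : IsDiscreteLO β)
    (hj : Nonempty α → Nonempty β → ((∃ a : α, IsTop a) ↔ ∃ b : β, IsBot b)) :
    IsDiscreteLO (α ⊕ₗ β) := by
  refine ⟨?_, ?_⟩
  · rintro (a | b) ⟨c | c, hc⟩
    · obtain ⟨a', ha'⟩ := hα.1 a ⟨c, inl_lt_inl_iff.1 hc⟩
      exact ⟨_, inl_covBy_inl_iff.2 ha'⟩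
    · by_cases ha : IsMax a
      · obtain ⟨b, hb⟩ := (hj ⟨a⟩ ⟨c⟩).1 ⟨a, ha.isTop⟩
        exact ⟨_, inl_covBy_inr_iff.2 ⟨ha, hb.isMin⟩⟩
      · obtain ⟨a', ha'⟩ := hα.1 a (not_isMax_iff.1 ha)
        exact ⟨_, inl_covBy_inl_iff.2 ha'⟩
    · exact absurd hc not_inr_lt_inl
    · obtain ⟨b', hb'⟩ := hβ.1 b ⟨c, inr_lt_inr_iff.1 hc⟩
      exact ⟨_, inr_covBy_inr_iff.2 hb'⟩
  · rintro (a | b) ⟨c | c, hc⟩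
    · obtain ⟨a', ha'⟩ := hα.2 a ⟨c, inl_lt_inl_iff.1 hc⟩
      exact ⟨_, inl_covBy_inl_iff.2 ha'⟩
    · exact absurd hc not_inr_lt_inl
    · by_cases hb : IsMin b
      · obtain ⟨a, ha⟩ := (hj ⟨c⟩ ⟨b⟩).2 ⟨b, hb.isBot⟩
        exact ⟨_, inl_covBy_inr_iff.2 ⟨ha.isMax, hb⟩⟩
      · obtain ⟨b', hb'⟩ := hβ.2 b (not_isMin_iff.1 hb)
        exact ⟨_, inr_covBy_inr_iff.2 hb'⟩
    · obtain ⟨b', hb'⟩ := hβ.2 b ⟨c, inr_lt_inr_iff.1 hc⟩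
      exact ⟨_, inr_covBy_inr_iff.2 hb'⟩

open Prod.Lex in
theorem isDiscreteLO_natLex_iff :
    IsDiscreteLO (ℕ ×ₗ α) ↔ IsDiscreteLO α ∧ ((∃ a : α, IsTop a) ↔ ∃ a : α, IsBot a) := by
  simp only [IsDiscreteLO, Lex.forall, Lex.exists, Prod.forall, Prod.exists, toLex_covBy_toLex_iff,
    toLex_lt_toLex, Nat.covBy_iff_add_one_eq]
  constructor
  · rintro ⟨hsucc, hpred⟩
    refine ⟨⟨fun a ⟨c, hc⟩ => ?_, fun a ⟨c, hc⟩ => ?_⟩, ⟨fun ⟨a, ha⟩ => ?_, fun ⟨a, ha⟩ => ?_⟩⟩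
    · obtain ⟨n, b, ⟨-, hab⟩ | ⟨-, ha, -⟩⟩ := hsucc 0 a ⟨0, c, .inr ⟨rfl, hc⟩⟩
      · exact ⟨b, hab⟩
      · exact absurd hc ha.not_lt
    · obtain ⟨n, b, ⟨-, hba⟩ | ⟨hn, -⟩⟩ := hpred 0 a ⟨0, c, .inr ⟨rfl, hc⟩⟩
      · exact ⟨b, hba⟩
      · omega
    · obtain ⟨n, b, ⟨-, hab⟩ | ⟨-, -, hb⟩⟩ := hsucc 0 a ⟨1, a, .inl one_pos⟩
      · exact absurd hab.lt ha.isMax.not_lt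
      · exact ⟨b, hb.isBot⟩
    · obtain ⟨n, b, ⟨-, hba⟩ | ⟨-, hb, -⟩⟩ := hpred 1 a ⟨0, a, .inl one_pos⟩
      · exact absurd hba.lt ha.isMin.not_lt
      · exact ⟨b, hb.isTop⟩
  · rintro ⟨⟨hsucc, hpred⟩, htop_iff_bot⟩
    refine ⟨fun n a _ => ?_, fun n a ⟨m, c, hlt⟩ => ?_⟩
    · by_cases ha : IsMax a
      · obtain ⟨b, hb⟩ := htop_iff_bot.1 ⟨a, ha.isTop⟩
        exact ⟨n + 1, b, .inr ⟨rfl, ha, hb.isMin⟩⟩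
      · obtain ⟨b, hab⟩ := hsucc a (not_isMax_iff.1 ha)
        exact ⟨n, b, .inl ⟨rfl, hab⟩⟩
    · by_cases ha : IsMin a
      · obtain ⟨k, rfl⟩ : ∃ k, n = k + 1 := by
          rcases hlt with hmn | ⟨-, hca⟩
          · exact ⟨n - 1, by omega⟩
          · exact absurd hca ha.not_lt
        obtain ⟨b, hb⟩ := htop_iff_bot.2 ⟨a, ha.isBot⟩
        exact ⟨k, b, .inr ⟨rfl, hb.isMax, ha⟩⟩
      · obtain ⟨b, hba⟩ := hpred a (not_isMin_iff.1 ha)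
        exact ⟨n, b, .inl ⟨rfl, hba⟩⟩

theorem isDiscreteLO_natDualLex_iff :
    IsDiscreteLO (ℕᵒᵈ ×ₗ α) ↔ IsDiscreteLO α ∧ ((∃ a : α, IsTop a) ↔ ∃ a : α, IsBot a) := by
  change IsDiscreteLO (ℕᵒᵈ ×ₗ αᵒᵈᵒᵈ) ↔ _
  rw [← IsDiscreteLO.congr (OrderIso.prodLexDualDistrib ℕ αᵒᵈ), isDiscreteLO_orderDual_iff,
    isDiscreteLO_natLex_iff, isDiscreteLO_orderDual_iff]
  simp only [OrderDual.exists, isTop_toDual_iff, isBot_toDual_iff, iff_comm]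

end DiscreteConstructions

section Regrouping
variable (α β : Type*)

def natLexRotate (x : ℕ ×ₗ (α ⊕ₗ β)) : α ⊕ₗ ℕ ×ₗ (β ⊕ₗ α) :=
  match ofLex (ofLex x).2, (ofLex x).1 with
  | inl a, 0 => toLex (inl a)
  | inl a, n + 1 => toLex (inr (toLex (n, toLex (inr a))))
  | inr b, n => toLex (inr (toLex (n, toLex (inl b))))

theorem natLexRotate_surjective : Function.Surjective (natLexRotate α β) := by
  rintro (a | ⟨n, b | a⟩)
  exacts [⟨toLex (0, toLex (inl a)), rfl⟩, ⟨toLex (n, toLex (inr b)), rfl⟩,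
    ⟨toLex (n + 1, toLex (inl a)), rfl⟩]

theorem natLexRotate_strictMono [LinearOrder α] [LinearOrder β] :
    StrictMono (natLexRotate α β) := by
  simp only [StrictMono, Lex.forall, Prod.forall, Sum.forall]
  refine fun n => ⟨fun a m => ⟨fun c h => ?_, fun d h => ?_⟩,
    fun b m => ⟨fun c h => ?_, fun d h => ?_⟩⟩ <;>
    rcases n with _ | n <;> rcases m with _ | m <;>
    simp_all [natLexRotate, Prod.Lex.toLex_lt_toLex] <;> omega

def natDualLexRotate (x : ℕᵒᵈ ×ₗ (α ⊕ₗ β)) : (ℕᵒᵈ ×ₗ (β ⊕ₗ α)) ⊕ₗ β :=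
  match ofLex (ofLex x).2, ofDual (ofLex x).1 with
  | inl a, n => toLex (inl (toLex (toDual n, toLex (inr a))))
  | inr b, 0 => toLex (inr b)
  | inr b, n + 1 => toLex (inl (toLex (toDual n, toLex (inl b))))

theorem natDualLexRotate_surjective : Function.Surjective (natDualLexRotate α β) := by
  rintro (⟨n, b | a⟩ | b)
  exacts [⟨toLex (toDual (ofDual n + 1), toLex (inr b)), rfl⟩, ⟨toLex (n, toLex (inl a)), rfl⟩,
    ⟨toLex (toDual 0, toLex (inr b)), rfl⟩]

theorem natDualLexRotate_strictMono [LinearOrder α] [LinearOrder β] :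
    StrictMono (natDualLexRotate α β) := by
  simp only [StrictMono, Lex.forall, Prod.forall, Sum.forall, OrderDual.forall]
  refine fun n => ⟨fun a m => ⟨fun c h => ?_, fun d h => ?_⟩,
    fun b m => ⟨fun c h => ?_, fun d h => ?_⟩⟩ <;>
    rcases n with _ | n <;> rcases m with _ | m <;>
    simp_all [natDualLexRotate, Prod.Lex.toLex_lt_toLex, -toDual_add, -toDual_zero] <;> omega

end Regrouping

namespace OrderIso

noncomputable def natLexRotate (α β : Type*) [LinearOrder α] [LinearOrder β] :
    ℕ ×ₗ (α ⊕ₗ β) ≃o α ⊕ₗ ℕ ×ₗ (β ⊕ₗ α) :=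
  StrictMono.orderIsoOfSurjective _ (natLexRotate_strictMono α β) (natLexRotate_surjective α β)

noncomputable def natDualLexRotate (α β : Type*) [LinearOrder α] [LinearOrder β] :
    ℕᵒᵈ ×ₗ (α ⊕ₗ β) ≃o (ℕᵒᵈ ×ₗ (β ⊕ₗ α)) ⊕ₗ β :=
  StrictMono.orderIsoOfSurjective _ (natDualLexRotate_strictMono α β)
    (natDualLexRotate_surjective α β)

def sumLexRegroup (p a q p' a' q' : Type*) [LE p] [LE a] [LE q] [LE p'] [LE a'] [LE q'] :
    (p ⊕ₗ a ⊕ₗ q) ⊕ₗ (p' ⊕ₗ a' ⊕ₗ q') ≃o p ⊕ₗ ((a ⊕ₗ q) ⊕ₗ (p' ⊕ₗ a')) ⊕ₗ q' :=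
  (sumLexAssoc p (a ⊕ₗ q) _).trans <| sumLexCongr (.refl p) <|
    (sumLexCongr (.refl _) (sumLexAssoc p' a' q').symm).trans (sumLexAssoc _ _ q').symm

end OrderIso

namespace BLinOrd

instance instNonemptyOf (α : Type) [LinearOrder α] [h : Nonempty α] :
    Nonempty (BLinOrd.of α).carrier := h

instance instIsEmptyOf (α : Type) [LinearOrder α] [h : IsEmpty α] :
    IsEmpty (BLinOrd.of α).carrier := h

instance instNoMinOrderOf (α : Type) [LinearOrder α] [h : NoMinOrder α] :
    NoMinOrder (BLinOrd.of α).carrier := h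

instance instNoMaxOrderOf (α : Type) [LinearOrder α] [h : NoMaxOrder α] :
    NoMaxOrder (BLinOrd.of α).carrier := h

end BLinOrd

theorem LOfp.of_isEmpty (X : BLinOrd) [IsEmpty X.carrier] : LOfp X :=
  .iso .empty ⟨OrderIso.ofIsEmpty (Fin 0) _⟩

def dLOfp11OrEmpty (X : BLinOrd) : Prop := dLOfp11 X ∨ IsEmpty X.carrier

def dLOfp10 (X : BLinOrd) : Prop :=
  LOfp X ∧ IsDiscreteLO X.carrier ∧ (∃ a : X.carrier, IsBot a) ∧ NoMaxOrder X.carrier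

def dLOfp01 (X : BLinOrd) : Prop :=
  LOfp X ∧ IsDiscreteLO X.carrier ∧ NoMinOrder X.carrier ∧ ∃ a : X.carrier, IsTop a

theorem dLOfp11_fin_one : dLOfp11 (.of (Fin 1)) :=
  ⟨.one, (IsDiscreteLO.of_subsingleton : IsDiscreteLO (Fin 1)),
    ⟨(0 : Fin 1), fun _ => (Fin.fin_one_eq_zero _).ge⟩,
    ⟨(0 : Fin 1), fun x => (Fin.fin_one_eq_zero x).le⟩⟩

theorem dLOfp11.nonempty {X : BLinOrd} (h : dLOfp11 X) : Nonempty X.carrier :=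
  h.2.2.1.nonempty

theorem dLOfp11.natLex {C : BLinOrd} (hC : dLOfp11 C) : dLOfp10 (.of (ℕ ×ₗ C.carrier)) := by
  obtain ⟨c, hc⟩ := hC.2.2.1
  refine ⟨.mulOmega hC.1, isDiscreteLO_natLex_iff.2 ⟨hC.2.1, iff_of_true hC.2.2.2 ⟨c, hc⟩⟩,
    ⟨toLex (0, c), ?_⟩, inferInstance⟩
  rintro ⟨n, c'⟩
  exact Prod.Lex.toLex_le_toLex.2 ((Nat.zero_le n).lt_or_eq.imp id fun h => ⟨h, hc c'⟩)

theorem dLOfp11.natDualLex {B : BLinOrd} (hB : dLOfp11 B) : dLOfp01 (.of (ℕᵒᵈ ×ₗ B.carrier)) := by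
  obtain ⟨b, hb⟩ := hB.2.2.2
  refine ⟨.mulOmegaStar hB.1, isDiscreteLO_natDualLex_iff.2 ⟨hB.2.1, iff_of_true ⟨b, hb⟩ hB.2.2.1⟩,
    inferInstance, ⟨toLex (toDual 0, b), ?_⟩⟩
  rintro ⟨n, b'⟩
  exact Prod.Lex.toLex_le_toLex.2
    ((Nat.zero_le (ofDual n)).lt_or_eq.imp id fun h => ⟨congrArg toDual h.symm, hb b'⟩)

namespace dLOfp11OrEmpty
variable {X Y : BLinOrd}

theorem of_isEmpty (X : BLinOrd) [IsEmpty X.carrier] : dLOfp11OrEmpty X := .inr ‹_›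

theorem lofp (h : dLOfp11OrEmpty X) : LOfp X :=
  h.elim (·.1) fun _ => .of_isEmpty X

theorem isDiscreteLO (h : dLOfp11OrEmpty X) : IsDiscreteLO X.carrier :=
  h.elim (·.2.1) fun _ => .of_isEmpty

theorem isEmpty_or_exists_isBot (h : dLOfp11OrEmpty X) :
    IsEmpty X.carrier ∨ ∃ a : X.carrier, IsBot a :=
  h.symm.imp_right (·.2.2.1)

theorem isEmpty_or_exists_isTop (h : dLOfp11OrEmpty X) :
    IsEmpty X.carrier ∨ ∃ a : X.carrier, IsTop a :=
  h.symm.imp_right (·.2.2.2)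

theorem dLOfp11 [Nonempty X.carrier] (h : dLOfp11OrEmpty X) : dLOfp11 X :=
  h.resolve_right (not_isEmpty_of_nonempty _)

theorem sumLex (hX : dLOfp11OrEmpty X) (hY : dLOfp11OrEmpty Y) :
    dLOfp11OrEmpty (.of (X.carrier ⊕ₗ Y.carrier)) := by
  rcases Sum.Lex.isEmpty_or_exists_isBot hX.isEmpty_or_exists_isBot
    hY.isEmpty_or_exists_isBot with hXY | hbot
  · exact .inr hXY
  refine .inl ⟨.add hX.lofp hY.lofp, ?_, hbot, ?_⟩
  · refine hX.isDiscreteLO.sumLex hY.isDiscreteLO fun _ _ => ?_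
    exact iff_of_true hX.dLOfp11.2.2.2 hY.dLOfp11.2.2.1
  · exact (Sum.Lex.isEmpty_or_exists_isTop hX.isEmpty_or_exists_isTop
      hY.isEmpty_or_exists_isTop).resolve_left (not_isEmpty_iff.2 ⟨hbot.choose⟩)

theorem sumLex_dLOfp10 (hX : dLOfp11OrEmpty X) (hY : dLOfp10 Y) :
    dLOfp10 (.of (X.carrier ⊕ₗ Y.carrier)) := by
  obtain ⟨hfp, hd, hbot, _⟩ := hY
  have : Nonempty Y.carrier := hbot.nonempty
  refine ⟨.add hX.lofp hfp, hX.isDiscreteLO.sumLex hd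
    fun _ _ => iff_of_true hX.dLOfp11.2.2.2 hbot, ?_, inferInstance⟩
  exact (Sum.Lex.isEmpty_or_exists_isBot hX.isEmpty_or_exists_isBot (.inr hbot)).resolve_left
    (not_isEmpty_of_nonempty _)

end dLOfp11OrEmpty

theorem dLOfp01.sumLex_dLOfp11OrEmpty {X Y : BLinOrd} (hX : dLOfp01 X) (hY : dLOfp11OrEmpty Y) :
    dLOfp01 (.of (X.carrier ⊕ₗ Y.carrier)) := by
  obtain ⟨hfp, hd, _, htop⟩ := hX
  have : Nonempty X.carrier := htop.nonempty
  refine ⟨.add hfp hY.lofp, hd.sumLex hY.isDiscreteLO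
    fun _ _ => iff_of_true htop hY.dLOfp11.2.2.1, inferInstance, ?_⟩
  exact (Sum.Lex.isEmpty_or_exists_isTop (.inr htop) hY.isEmpty_or_exists_isTop).resolve_left
    (not_isEmpty_of_nonempty _)

theorem dLOfp10.sumLex_dLOfp01 {X Y : BLinOrd} (hX : dLOfp10 X) (hY : dLOfp01 Y) :
    dLOfp11 (.of (X.carrier ⊕ₗ Y.carrier)) := by
  obtain ⟨hfpX, hdX, ⟨x, hx⟩, _⟩ := hX
  obtain ⟨hfpY, hdY, _, ⟨y, hy⟩⟩ := hY
  refine ⟨.add hfpX hfpY, hdX.sumLex hdY fun _ _ => ?_,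
    ⟨_, Sum.Lex.isBot_inl hx⟩, ⟨_, Sum.Lex.isTop_inr hy⟩⟩
  exact iff_of_false (fun ⟨a, ha⟩ => not_isTop a ha) (fun ⟨b, hb⟩ => not_isBot b hb)

def IsEmptyOrMulOmegaStar (P : BLinOrd) : Prop :=
  IsEmpty P.carrier ∨ ∃ B, dLOfp11 B ∧ P = .of (ℕᵒᵈ ×ₗ B.carrier)

def IsEmptyOrMulOmega (Q : BLinOrd) : Prop :=
  IsEmpty Q.carrier ∨ ∃ C, dLOfp11 C ∧ Q = .of (ℕ ×ₗ C.carrier)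

def HasNormalForm (α : Type) [LinearOrder α] : Prop :=
  ∃ P A Q : BLinOrd, IsEmptyOrMulOmegaStar P ∧ dLOfp11OrEmpty A ∧ IsEmptyOrMulOmega Q ∧
    Nonempty (α ≃o P.carrier ⊕ₗ A.carrier ⊕ₗ Q.carrier)

section NormalForm
variable {P A Q : BLinOrd}

theorem exists_isBot_iff_isEmpty_of_normalForm (hP : IsEmptyOrMulOmegaStar P)
    (hA : dLOfp11OrEmpty A) (hQ : IsEmptyOrMulOmega Q)
    [Nonempty (P.carrier ⊕ₗ A.carrier ⊕ₗ Q.carrier)] :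
    (∃ x : P.carrier ⊕ₗ A.carrier ⊕ₗ Q.carrier, IsBot x) ↔ IsEmpty P.carrier := by
  rcases hP with hP | ⟨B, hB, rfl⟩
  · have hQ' : IsEmpty Q.carrier ∨ ∃ q : Q.carrier, IsBot q := by
      rcases hQ with hQ | ⟨C, hC, rfl⟩
      exacts [.inl hQ, .inr hC.natLex.2.2.1]
    refine iff_of_true ?_ hP
    exact (Sum.Lex.isEmpty_or_exists_isBot (.inl hP) (Sum.Lex.isEmpty_or_exists_isBot
      hA.isEmpty_or_exists_isBot hQ')).resolve_left (not_isEmpty_of_nonempty _)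
  · have := hB.nonempty
    exact iff_of_false (fun ⟨x, hx⟩ => not_isBot x hx) (not_isEmpty_of_nonempty _)

theorem exists_isTop_iff_isEmpty_of_normalForm (hP : IsEmptyOrMulOmegaStar P)
    (hA : dLOfp11OrEmpty A) (hQ : IsEmptyOrMulOmega Q)
    [Nonempty (P.carrier ⊕ₗ A.carrier ⊕ₗ Q.carrier)] :
    (∃ x : P.carrier ⊕ₗ A.carrier ⊕ₗ Q.carrier, IsTop x) ↔ IsEmpty Q.carrier := by
  rcases hQ with hQ | ⟨C, hC, rfl⟩
  · have hP' : IsEmpty P.carrier ∨ ∃ p : P.carrier, IsTop p := by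
      rcases hP with hP | ⟨B, hB, rfl⟩
      exacts [.inl hP, .inr hB.natDualLex.2.2.2]
    refine iff_of_true ?_ hQ
    exact (Sum.Lex.isEmpty_or_exists_isTop hP' (Sum.Lex.isEmpty_or_exists_isTop
      hA.isEmpty_or_exists_isTop (.inl hQ))).resolve_left (not_isEmpty_of_nonempty _)
  · have := hC.nonempty
    exact iff_of_false (fun ⟨x, hx⟩ => not_isTop x hx) (not_isEmpty_of_nonempty _)

end NormalForm

namespace HasNormalForm
variable {α β : Type} [LinearOrder α] [LinearOrder β]

theorem of_orderIso (h : HasNormalForm α) (e : α ≃o β) : HasNormalForm β :=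
  let ⟨P, A, Q, hP, hA, hQ, ⟨f⟩⟩ := h
  ⟨P, A, Q, hP, hA, hQ, ⟨e.symm.trans f⟩⟩

theorem of_dLOfp11OrEmpty {A : BLinOrd} (hA : dLOfp11OrEmpty A) : HasNormalForm A.carrier :=
  ⟨.of Empty, A, .of Empty, .inl inferInstance, hA, .inl inferInstance,
    ⟨OrderIso.sumLexEmpty.symm.trans OrderIso.emptySumLex.symm⟩⟩

theorem of_isEmpty [IsEmpty α] : HasNormalForm α :=
  (of_dLOfp11OrEmpty (.of_isEmpty (.of α))).of_orderIso (.refl α)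

theorem of_sumLex {P Q : BLinOrd} (hP : IsEmptyOrMulOmegaStar P) (hQ : IsEmptyOrMulOmega Q) :
    HasNormalForm (P.carrier ⊕ₗ Q.carrier) :=
  ⟨P, .of Empty, Q, hP, .of_isEmpty _, hQ,
    ⟨OrderIso.sumLexCongr (.refl _) OrderIso.emptySumLex.symm⟩⟩

theorem sumLex (hα : HasNormalForm α) (hβ : HasNormalForm β) (hd : IsDiscreteLO (α ⊕ₗ β)) :
    HasNormalForm (α ⊕ₗ β) := by
  rcases isEmpty_or_nonempty α with _ | ⟨⟨a⟩⟩
  · exact hβ.of_orderIso OrderIso.emptySumLex.symm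
  rcases isEmpty_or_nonempty β with _ | ⟨⟨b⟩⟩
  · exact hα.of_orderIso OrderIso.sumLexEmpty.symm
  obtain ⟨P₁, A₁, Q₁, hP₁, hA₁, hQ₁, ⟨e₁⟩⟩ := hα
  obtain ⟨P₂, A₂, Q₂, hP₂, hA₂, hQ₂, ⟨e₂⟩⟩ := hβ
  have : Nonempty (P₁.carrier ⊕ₗ A₁.carrier ⊕ₗ Q₁.carrier) := ⟨e₁ a⟩
  have : Nonempty (P₂.carrier ⊕ₗ A₂.carrier ⊕ₗ Q₂.carrier) := ⟨e₂ b⟩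
  have hQ₁P₂ : IsEmpty Q₁.carrier ↔ IsEmpty P₂.carrier := by
    rw [← exists_isTop_iff_isEmpty_of_normalForm hP₁ hA₁ hQ₁,
      ← exists_isBot_iff_isEmpty_of_normalForm hP₂ hA₂ hQ₂]
    exact (hd.of_orderIso (e₁.sumLexCongr e₂)).of_sumLex.2.2 ‹_› ‹_›
  refine ⟨P₁, .of ((A₁.carrier ⊕ₗ Q₁.carrier) ⊕ₗ (P₂.carrier ⊕ₗ A₂.carrier)), Q₂, hP₁, ?_, hQ₂,
    ⟨(e₁.sumLexCongr e₂).trans (OrderIso.sumLexRegroup _ _ _ _ _ _)⟩⟩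
  rcases hQ₁ with hQ₁ | ⟨C, hC, rfl⟩ <;> rcases hP₂ with hP₂ | ⟨B, hB, rfl⟩
  · exact (hA₁.sumLex (.of_isEmpty Q₁)).sumLex ((dLOfp11OrEmpty.of_isEmpty P₂).sumLex hA₂)
  · have := hB.nonempty
    exact absurd (hQ₁P₂.1 hQ₁) (not_isEmpty_of_nonempty _)
  · have := hC.nonempty
    exact absurd (hQ₁P₂.2 hP₂) (not_isEmpty_of_nonempty _)
  · exact .inl ((hA₁.sumLex_dLOfp10 hC.natLex).sumLex_dLOfp01
      (hB.natDualLex.sumLex_dLOfp11OrEmpty hA₂))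

theorem natLex (h : HasNormalForm α) (hd : IsDiscreteLO (ℕ ×ₗ α)) : HasNormalForm (ℕ ×ₗ α) := by
  rcases isEmpty_or_nonempty α with _ | ⟨⟨a⟩⟩
  · exact @of_isEmpty _ _ (inferInstanceAs (IsEmpty (ℕ × α)))
  obtain ⟨P, A, Q, hP, hA, hQ, ⟨e⟩⟩ := h
  have : Nonempty (P.carrier ⊕ₗ A.carrier ⊕ₗ Q.carrier) := ⟨e a⟩
  let e' := Prod.Lex.prodLexCongr (.refl ℕ) e
  have hQP : IsEmpty Q.carrier ↔ IsEmpty P.carrier := by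
    rw [← exists_isTop_iff_isEmpty_of_normalForm hP hA hQ,
      ← exists_isBot_iff_isEmpty_of_normalForm hP hA hQ]
    exact (isDiscreteLO_natLex_iff.1 (hd.of_orderIso e')).2
  refine of_orderIso ?_ e'.symm
  rcases hP with hP | ⟨B, hB, rfl⟩ <;> rcases hQ with hQ | ⟨C, hC, rfl⟩
  · let f : P.carrier ⊕ₗ A.carrier ⊕ₗ Q.carrier ≃o A.carrier :=
      OrderIso.emptySumLex.trans OrderIso.sumLexEmpty
    have : Nonempty A.carrier := ⟨f (e a)⟩
    exact (of_sumLex (P := .of Empty) (.inl inferInstance) (.inr ⟨A, hA.dLOfp11, rfl⟩)).of_orderIso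
      (OrderIso.emptySumLex.trans (Prod.Lex.prodLexCongr (.refl ℕ) f).symm)
  · have := hC.nonempty
    exact absurd (hQP.2 hP) (not_isEmpty_of_nonempty _)
  · have := hB.nonempty
    exact absurd (hQP.1 hQ) (not_isEmpty_of_nonempty _)
  · exact (of_sumLex (.inr ⟨B, hB, rfl⟩) (.inr ⟨_,
      (hA.sumLex_dLOfp10 hC.natLex).sumLex_dLOfp01 hB.natDualLex, rfl⟩)).of_orderIso
      (OrderIso.natLexRotate _ _).symm

theorem natDualLex (h : HasNormalForm α) (hd : IsDiscreteLO (ℕᵒᵈ ×ₗ α)) :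
    HasNormalForm (ℕᵒᵈ ×ₗ α) := by
  rcases isEmpty_or_nonempty α with _ | ⟨⟨a⟩⟩
  · exact @of_isEmpty _ _ (inferInstanceAs (IsEmpty (ℕᵒᵈ × α)))
  obtain ⟨P, A, Q, hP, hA, hQ, ⟨e⟩⟩ := h
  have : Nonempty (P.carrier ⊕ₗ A.carrier ⊕ₗ Q.carrier) := ⟨e a⟩
  let e' := Prod.Lex.prodLexCongr (.refl ℕᵒᵈ) e
  have hQP : IsEmpty Q.carrier ↔ IsEmpty P.carrier := by
    rw [← exists_isTop_iff_isEmpty_of_normalForm hP hA hQ,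
      ← exists_isBot_iff_isEmpty_of_normalForm hP hA hQ]
    exact (isDiscreteLO_natDualLex_iff.1 (hd.of_orderIso e')).2
  refine of_orderIso ?_ e'.symm
  rcases hP with hP | ⟨B, hB, rfl⟩ <;> rcases hQ with hQ | ⟨C, hC, rfl⟩
  · let f : P.carrier ⊕ₗ A.carrier ⊕ₗ Q.carrier ≃o A.carrier :=
      OrderIso.emptySumLex.trans OrderIso.sumLexEmpty
    have : Nonempty A.carrier := ⟨f (e a)⟩
    exact (of_sumLex (Q := .of Empty) (.inr ⟨A, hA.dLOfp11, rfl⟩) (.inl inferInstance)).of_orderIso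
      (OrderIso.sumLexEmpty.trans (Prod.Lex.prodLexCongr (.refl ℕᵒᵈ) f).symm)
  · have := hC.nonempty
    exact absurd (hQP.2 hP) (not_isEmpty_of_nonempty _)
  · have := hB.nonempty
    exact absurd (hQP.1 hQ) (not_isEmpty_of_nonempty _)
  · exact (of_sumLex (.inr ⟨_, hC.natLex.sumLex_dLOfp01
      (hB.natDualLex.sumLex_dLOfp11OrEmpty hA), rfl⟩) (.inr ⟨C, hC, rfl⟩)).of_orderIso
      ((Prod.Lex.prodLexCongr (.refl _) (OrderIso.sumLexAssoc _ _ _).symm).trans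
        (OrderIso.natDualLexRotate _ _)).symm

end HasNormalForm

theorem LOfp.hasNormalForm {X : BLinOrd} (hX : LOfp X) (hd : IsDiscreteLO X.carrier) :
    HasNormalForm X.carrier := by
  induction hX with
  | empty => exact .of_isEmpty (α := Fin 0)
  | one => exact .of_dLOfp11OrEmpty (.inl dLOfp11_fin_one)
  | iso _ e ih =>
    obtain ⟨e⟩ := e
    exact (ih (hd.of_orderIso e.symm)).of_orderIso e
  | add _ _ ihX ihY =>
    obtain ⟨hdX, hdY, -⟩ := hd.of_sumLex
    exact (ihX hdX).sumLex (ihY hdY) hd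
  | mulOmega _ ih => exact (ih (isDiscreteLO_natLex_iff.1 hd).1).natLex hd
  | mulOmegaStar _ ih => exact (ih (isDiscreteLO_natDualLex_iff.1 hd).1).natDualLex hd

theorem dLOfp01_structure_general (X : BLinOrd) (hfp : LOfp X)
    (hdisc : IsDiscreteLO X.carrier)
    (hnomin : ∀ a : X.carrier, ∃ b, b < a)
    (hmax : ∃ m : X.carrier, ∀ x, x ≤ m) :
    ∃ L1 L2 : BLinOrd, dLOfp11 L1 ∧ (dLOfp11 L2 ∨ IsEmpty L2.carrier) ∧
      Nonempty (X.carrier ≃o ((ℕᵒᵈ ×ₗ L1.carrier) ⊕ₗ L2.carrier)) := by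
  obtain ⟨P, A, Q, hP, hA, hQ, ⟨e⟩⟩ := hfp.hasNormalForm hdisc
  obtain ⟨m, hm⟩ := hmax
  have : Nonempty (P.carrier ⊕ₗ A.carrier ⊕ₗ Q.carrier) := ⟨e m⟩
  have hQ_empty : IsEmpty Q.carrier := (exists_isTop_iff_isEmpty_of_normalForm hP hA hQ).1
    ⟨e m, (e.isMax_apply.2 (IsTop.isMax hm)).isTop⟩
  have hP_nonempty : ¬ IsEmpty P.carrier := by
    rw [← exists_isBot_iff_isEmpty_of_normalForm hP hA hQ]
    rintro ⟨x, hx⟩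
    obtain ⟨b, hb⟩ := hnomin (e.symm x)
    exact (e.isMin_apply.1 (by simpa using hx.isMin)).not_lt hb
  obtain ⟨B, hB, rfl⟩ := hP.resolve_left hP_nonempty
  exact ⟨B, A, hB, hA, ⟨e.trans (OrderIso.sumLexCongr (.refl _) OrderIso.sumLexEmpty)⟩⟩

/-- a nonempty discrete finitely presented linear order with no minimum and
with a maximum is isomorphic to `L₁·ω* + L₂` with `L₁ ∈ dLO_fp¹¹` and
`L₂ ∈ dLO_fp¹¹ ∪ {𝟎}`. -/
theorem dLOfp01_structure (X : BLinOrd) (hne : Nonempty X.carrier) (hfp : LOfp X)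
    (hdisc : IsDiscreteLO X.carrier)
    (hnomin : ∀ a : X.carrier, ∃ b, b < a)
    (hmax : ∃ m : X.carrier, ∀ x, x ≤ m) :
    ∃ L1 L2 : BLinOrd, dLOfp11 L1 ∧ (dLOfp11 L2 ∨ IsEmpty L2.carrier) ∧
      Nonempty (X.carrier ≃o ((ℕᵒᵈ ×ₗ L1.carrier) ⊕ₗ L2.carrier)) :=
  dLOfp01_structure_general X hfp hdisc hnomin hmax
end
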